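/- If the parent map p additionally satisfies that every fixed point of p is a local leader (i.e., every non-leader has a genuine parent), then for every vertex u the vertex p^[|V|](u) is a local leader: following parent pointers from any vertex terminates at a local leader, so every vertex is assigned to the community of some local leader. -/

import Mathlib

/-- The defer relation of the Local Search algorithm: `u` defers (points) to `v` iff
`u` and `v` are adjacent and `v` is strictly greater in the lexicographic order on
(degree, traversal order). -/
def deferRel {V : Type*} [Fintype V] [LinearOrder V] (G : SimpleGraph V)
    [DecidableRel G.Adj] (u v : V) : Prop :=
  G.Adj u v ∧ (G.degree u < G.degree v ∨ (G.degree u = G.degree v ∧ u < v))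

/-- A vertex is a local leader if it defers to no vertex. -/
def IsLocalLeader {V : Type*} [Fintype V] [LinearOrder V] (G : SimpleGraph V)
    [DecidableRel G.Adj] (u : V) : Prop :=
  ∀ v : V, ¬ deferRel G u v

/-- If every fixed point of the parent map is a local leader, then following parent
pointers from any vertex terminates at a local leader: every vertex is assigned to
the community of some local leader. -/
theorem parent_iterate_localLeader {V : Type*} [Fintype V] [LinearOrder V]
    (G : SimpleGraph V) [DecidableRel G.Adj] (p : V → V)
    (hp : ∀ u : V, p u = u ∨ deferRel G u (p u))
    (hfix : ∀ u : V, p u = u → IsLocalLeader G u) (u : V) :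
    IsLocalLeader G (p^[Fintype.card V] u) := by
  classical
  set n := Fintype.card V with hn
  have key : ∃ k ≤ n, p (p^[k] u) = p^[k] u := by
    by_contra h
    push_neg at h
    have step : ∀ k : Fin n,
        toLex (G.degree (p^[(k : ℕ)] u), p^[(k : ℕ)] u)
          < toLex (G.degree (p^[(k : ℕ) + 1] u), p^[(k : ℕ) + 1] u) := by
      intro k
      have hne := h (k : ℕ) (le_of_lt k.isLt)
      rcases hp (p^[(k : ℕ)] u) with h1 | h2
      · exact absurd h1 hne
      · rw [Function.iterate_succ_apply']
        rcases h2.2 with hd | ⟨hd, hl⟩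
        · exact Prod.Lex.lt_iff.mpr (Or.inl hd)
        · exact Prod.Lex.lt_iff.mpr (Or.inr ⟨hd, hl⟩)
    have mono : StrictMono (fun k : Fin (n + 1) =>
        toLex (G.degree (p^[(k : ℕ)] u), p^[(k : ℕ)] u)) := by
      refine Fin.strictMono_iff_lt_succ.mpr ?_
      intro i
      exact step i
    have inj : Function.Injective (fun k : Fin (n + 1) => p^[(k : ℕ)] u) := by
      intro a b hab
      exact mono.injective (congrArg (fun v => toLex (G.degree v, v)) hab)
    have := Fintype.card_le_of_injective _ inj
    rw [Fintype.card_fin, ← hn] at this; omega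
  obtain ⟨k, hk, hfixk⟩ := key
  have hiter : p^[n] u = p^[k] u := by
    have : p^[n] u = p^[n - k] (p^[k] u) := by
      rw [← Function.iterate_add_apply, Nat.sub_add_cancel hk]
    rw [this, Function.iterate_fixed hfixk]
  rw [hiter]
  exact hfix _ hfixk
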